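/- arXiv:2502.13455 — 2 statements merged into one kernel-verified Lean document; each statement's English description precedes it below -/
import Mathlib

section
/- Let L be the Laplacian of a connected graph G on n vertices, L̂ real symmetric with zero row and column sums, and L_w = L + L̂ ε. If X is a real {1}-inverse of L (LXL = L), then X - X L̂ X ε is a {1}-inverse of L_w, i.e., L_w (X - X L̂ X ε) L_w = L_w. -/
open Matrix

/-- The dual matrix `A_s + A_d ε` built from its standard and infinitesimal parts. -/
def dm {m n : Type*} (A B : Matrix m n ℝ) : Matrix m n (DualNumber ℝ) :=
  Matrix.of fun i j => TrivSqZeroExt.inl (A i j) + TrivSqZeroExt.inr (B i j)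

/-!
Since the graph is connected, the kernel of `L` consists of the constant vectors. Hence
`L (I - XL) = 0` makes every column of `I - XL` constant, which `L̂` kills because its row sums
vanish: `L̂ X L = L̂`. Dually, `(I - LX) L = 0` and the vanishing column sums give `L X L̂ = L̂`.
With these two identities the `ε`-part of `L_w (X - X L̂ X ε) L_w` collapses to
`L X L̂ - L X L̂ X L + L̂ X L = L̂`.
-/

theorem dm_mul {m p q : Type*} [Fintype p] (A B : Matrix m p ℝ) (C D : Matrix p q ℝ) :
    dm A B * dm C D = dm (A * C) (A * D + B * C) := by
  ext i j <;>
    simp [dm, Matrix.mul_apply, TrivSqZeroExt.fst_sum, TrivSqZeroExt.snd_sum,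
      Finset.sum_add_distrib, mul_comm]

theorem dm_mul_mul_eq_self {V : Type*} [Fintype V] {A B X : Matrix V V ℝ}
    (hA : A * X * A = A) (hl : A * X * B = B) (hr : B * X * A = B) :
    dm A B * dm X (-(X * B * X)) * dm A B = dm A B := by
  rw [dm_mul, dm_mul, hA]
  congr 1
  calc A * X * B + (A * -(X * B * X) + B * X) * A
      = A * X * B - (A * X * B) * X * A + B * X * A := by noncomm_ring
    _ = B := by rw [hl, hr, sub_self, zero_add]

namespace SimpleGraph

variable {V : Type*} [Fintype V] [DecidableEq V] {G : SimpleGraph V} [DecidableRel G.Adj]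

theorem Connected.mul_eq_zero_of_lapMatrix_mul_eq_zero {n : Type*} (hG : G.Connected)
    {B : Matrix n V ℝ} (hB : B *ᵥ (fun _ => 1) = 0) {P : Matrix V n ℝ}
    (hP : G.lapMatrix ℝ * P = 0) : B * P = 0 := by
  obtain ⟨v₀⟩ := hG.nonempty
  ext i j
  have hker : G.lapMatrix ℝ *ᵥ (fun k => P k j) = 0 := by
    ext k
    simpa [Matrix.mul_apply, mulVec, dotProduct] using congrFun (congrFun hP k) j
  have hconst : ∀ k, P k j = P v₀ j := fun k =>
    lapMatrix_mulVec_eq_zero_iff_forall_reachable G |>.mp hker k v₀ (hG.preconnected k v₀)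
  have hrow : ∑ k, B i k = 0 := by simpa [mulVec, dotProduct] using congrFun hB i
  simp [Matrix.mul_apply, hconst, ← Finset.sum_mul, hrow]

theorem Connected.mul_eq_zero_of_mul_lapMatrix_eq_zero {n : Type*} (hG : G.Connected)
    {B : Matrix V n ℝ} (hB : (fun _ => 1) ᵥ* B = 0) {P : Matrix n V ℝ}
    (hP : P * G.lapMatrix ℝ = 0) : P * B = 0 := by
  have hBt : Bᵀ *ᵥ (fun _ => 1) = 0 := by rw [mulVec_transpose, hB]
  have hPt : G.lapMatrix ℝ * Pᵀ = 0 := by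
    rw [← (G.isSymm_lapMatrix ℝ).eq, ← transpose_mul, hP, transpose_zero]
  simpa [transpose_mul] using congrArg transpose (hG.mul_eq_zero_of_lapMatrix_mul_eq_zero hBt hPt)

end SimpleGraph

theorem dual_laplacian_one_inverse_general {n : ℕ}
    (G : SimpleGraph (Fin n)) [DecidableRel G.Adj] (hG : G.Connected)
    (Lhat : Matrix (Fin n) (Fin n) ℝ)
    (hrow : Lhat *ᵥ (fun _ => (1 : ℝ)) = 0)
    (hcol : (fun _ => (1 : ℝ)) ᵥ* Lhat = 0)
    (X : Matrix (Fin n) (Fin n) ℝ)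
    (hX : G.lapMatrix ℝ * X * G.lapMatrix ℝ = G.lapMatrix ℝ) :
    dm (G.lapMatrix ℝ) Lhat * dm X (-(X * Lhat * X)) * dm (G.lapMatrix ℝ) Lhat
      = dm (G.lapMatrix ℝ) Lhat := by
  set L := G.lapMatrix ℝ
  have hleft : (1 - L * X) * L = 0 := by rw [sub_mul, one_mul, hX, sub_self]
  have hright : L * (1 - X * L) = 0 := by rw [mul_sub, mul_one, ← mul_assoc, hX, sub_self]
  refine dm_mul_mul_eq_self hX ?_ ?_
  · have := hG.mul_eq_zero_of_mul_lapMatrix_eq_zero hcol hleft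
    rwa [sub_mul, one_mul, sub_eq_zero, eq_comm] at this
  · have := hG.mul_eq_zero_of_lapMatrix_mul_eq_zero hrow hright
    rwa [mul_sub, mul_one, sub_eq_zero, eq_comm, ← mul_assoc] at this

/-- If `X` is a real `{1}`-inverse of the Laplacian `L` of a connected graph and `L̂` is
symmetric with zero row and column sums, then `X - X L̂ X ε` is a `{1}`-inverse of
`L_w = L + L̂ ε`. -/
theorem dual_laplacian_one_inverse {n : ℕ} (hn : 0 < n)
    (G : SimpleGraph (Fin n)) [DecidableRel G.Adj] (hG : G.Connected)
    (Lhat : Matrix (Fin n) (Fin n) ℝ) (hsym : Lhatᵀ = Lhat)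
    (hrow : Lhat *ᵥ (fun _ => (1 : ℝ)) = 0)
    (hcol : (fun _ => (1 : ℝ)) ᵥ* Lhat = 0)
    (X : Matrix (Fin n) (Fin n) ℝ)
    (hX : G.lapMatrix ℝ * X * G.lapMatrix ℝ = G.lapMatrix ℝ) :
    dm (G.lapMatrix ℝ) Lhat * dm X (-(X * Lhat * X)) * dm (G.lapMatrix ℝ) Lhat
      = dm (G.lapMatrix ℝ) Lhat :=
  dual_laplacian_one_inverse_general G hG Lhat hrow hcol X hX
end

section
/- Let L_w be the dual Laplacian of a connected dual number weighted graph on n vertices with dual Moore-Penrose inverse L_w†. If X is any {1}-inverse of L_w (L_w X L_w = L_w), then for all i ≠ j, (1_i - 1_j)ᵀ X (1_i - 1_j) = (1_i - 1_j)ᵀ L_w† (1_i - 1_j). In particular the dual resistance distance R_{ij}(G^w) := (L_w†)_{ii} + (L_w†)_{jj} - 2(L_w†)_{ij} equals X_{ii} + X_{jj} - X_{ij} - X_{ji} for every {1}-inverse X. -/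
open Matrix

/-!
If `A` is symmetric over a commutative ring and `A X A = A`, then
`(A w)ᵀ X (A w) = wᵀ (A X A) w = wᵀ A w`, so all `{1}`-inverses of `A` define the same quadratic
form on the range of `A`. When `A` has a Moore–Penrose inverse `B`, the symmetric matrix `1 - A B`
has its columns in `ker A`, so it kills every `u ⊥ ker A`; hence `u = A (B u)` lies in the range.
The kernel of the dual Laplacian consists of constant vectors: its standard part is the Laplacian
of a connected graph and `L̂` kills constants. So `1_i - 1_j` is in the range of `L_w`, and
`L_w†` is symmetric by uniqueness of the Moore–Penrose inverse.
-/

namespace Matrix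

variable {n R : Type*} [Fintype n] [CommRing R]

structure IsMoorePenroseInverse (A B : Matrix n n R) : Prop where
  mul_mul_eq_left : A * B * A = A
  mul_mul_eq_right : B * A * B = B
  transpose_mul_eq_left : (A * B)ᵀ = A * B
  transpose_mul_eq_right : (B * A)ᵀ = B * A

namespace IsMoorePenroseInverse

variable {A B C : Matrix n n R}

theorem transpose (h : IsMoorePenroseInverse A B) : IsMoorePenroseInverse Aᵀ Bᵀ where
  mul_mul_eq_left := by
    simpa only [transpose_mul, mul_assoc] using congrArg Matrix.transpose h.mul_mul_eq_left
  mul_mul_eq_right := by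
    simpa only [transpose_mul, mul_assoc] using congrArg Matrix.transpose h.mul_mul_eq_right
  transpose_mul_eq_left := by
    rw [← transpose_mul, transpose_transpose, h.transpose_mul_eq_right]
  transpose_mul_eq_right := by
    rw [← transpose_mul, transpose_transpose, h.transpose_mul_eq_left]

theorem unique (hB : IsMoorePenroseInverse A B) (hC : IsMoorePenroseInverse A C) : B = C :=
  calc B = B * (A * B)ᵀ := by
        rw [hB.transpose_mul_eq_left, ← mul_assoc, hB.mul_mul_eq_right]
    _ = B * ((A * C * A) * B)ᵀ := by rw [hC.mul_mul_eq_left]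
    _ = B * ((A * B)ᵀ * (A * C)ᵀ) := by simp only [transpose_mul, mul_assoc]
    _ = B * A * C := by
        rw [hB.transpose_mul_eq_left, hC.transpose_mul_eq_left]
        simp only [← mul_assoc, hB.mul_mul_eq_right]
    _ = (B * A)ᵀ * (C * A)ᵀ * C := by
        rw [hB.transpose_mul_eq_right, hC.transpose_mul_eq_right]
        simp only [mul_assoc, hC.mul_mul_eq_right]
    _ = (C * (A * B * A))ᵀ * C := by simp only [transpose_mul, mul_assoc]
    _ = C := by rw [hB.mul_mul_eq_left, hC.transpose_mul_eq_right, hC.mul_mul_eq_right]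

theorem transpose_eq_self (h : IsMoorePenroseInverse A B) (hA : Aᵀ = A) : Bᵀ = B :=
  (hA ▸ h.transpose).unique h

end IsMoorePenroseInverse

theorem dotProduct_mulVec_eq_of_mul_mul_eq_self {A X : Matrix n n R} (hA : Aᵀ = A)
    (hX : A * X * A = A) (w : n → R) : (A *ᵥ w) ⬝ᵥ X *ᵥ (A *ᵥ w) = w ⬝ᵥ A *ᵥ w :=
  calc (A *ᵥ w) ⬝ᵥ X *ᵥ (A *ᵥ w) = w ⬝ᵥ A *ᵥ (X *ᵥ (A *ᵥ w)) := by
        rw [dotProduct_mulVec w, ← mulVec_transpose, hA]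
    _ = w ⬝ᵥ A *ᵥ w := by rw [mulVec_mulVec, mulVec_mulVec, hX]

variable [DecidableEq n]

theorem vecMul_eq_zero_of_mul_eq_zero {A N : Matrix n n R} (hAN : A * N = 0) {u : n → R}
    (hu : ∀ v, A *ᵥ v = 0 → u ⬝ᵥ v = 0) : u ᵥ* N = 0 := by
  funext k
  have hcol : A *ᵥ (N *ᵥ Pi.single k 1) = 0 := by rw [mulVec_mulVec, hAN, zero_mulVec]
  simpa only [dotProduct_mulVec, dotProduct_single_one, Pi.zero_apply] using hu _ hcol

theorem IsMoorePenroseInverse.mul_mulVec_eq_self {A B : Matrix n n R}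
    (hB : IsMoorePenroseInverse A B) (hA : Aᵀ = A) {u : n → R}
    (hu : ∀ v, A *ᵥ v = 0 → u ⬝ᵥ v = 0) : A *ᵥ (B *ᵥ u) = u := by
  have hAN : A * (1 - A * B) = 0 := by
    rw [← hA, ← transpose_transpose (1 - _), ← transpose_mul, transpose_sub, transpose_one, hA,
      hB.transpose_mul_eq_left, sub_mul, one_mul, hB.mul_mul_eq_left, sub_self, transpose_zero]
  have hN : (1 - A * B) *ᵥ u = 0 := by
    rw [← vecMul_transpose, transpose_sub, transpose_one, hB.transpose_mul_eq_left]
    exact vecMul_eq_zero_of_mul_eq_zero hAN hu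
  rwa [sub_mulVec, one_mulVec, ← mulVec_mulVec, sub_eq_zero, eq_comm] at hN

theorem IsMoorePenroseInverse.dotProduct_mulVec_eq {A B X : Matrix n n R}
    (hB : IsMoorePenroseInverse A B) (hA : Aᵀ = A) (hX : A * X * A = A) {u : n → R}
    (hu : ∀ v, A *ᵥ v = 0 → u ⬝ᵥ v = 0) : u ⬝ᵥ X *ᵥ u = u ⬝ᵥ B *ᵥ u := by
  rw [← hB.mul_mulVec_eq_self hA hu, dotProduct_mulVec_eq_of_mul_mul_eq_self hA hX,
    dotProduct_mulVec_eq_of_mul_mul_eq_self hA hB.mul_mul_eq_left]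

theorem single_sub_single_dotProduct_mulVec (M : Matrix n n R) (i j : n) :
    (Pi.single i 1 - Pi.single j 1) ⬝ᵥ M *ᵥ (Pi.single i 1 - Pi.single j 1)
      = M i i + M j j - M i j - M j i := by
  simp only [mulVec_sub, mulVec_single_one, sub_dotProduct, single_one_dotProduct,
    Pi.sub_apply, col_apply]
  ring

end Matrix

section DualMatrix

variable {m n : Type*}

theorem dm_transpose (A B : Matrix m n ℝ) : (dm A B)ᵀ = dm Aᵀ Bᵀ := rfl

variable [Fintype n]

theorem fst_dm_mulVec (A B : Matrix m n ℝ) (v : n → DualNumber ℝ) (k : m) :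
    ((dm A B *ᵥ v) k).fst = (A *ᵥ fun l => (v l).fst) k := by
  simp [dm, mulVec, dotProduct, TrivSqZeroExt.fst_sum]

theorem snd_dm_mulVec (A B : Matrix m n ℝ) (v : n → DualNumber ℝ) (k : m) :
    ((dm A B *ᵥ v) k).snd = (A *ᵥ fun l => (v l).snd) k + (B *ᵥ fun l => (v l).fst) k := by
  simp [dm, mulVec, dotProduct, TrivSqZeroExt.snd_sum, Finset.sum_add_distrib]

theorem dm_mulVec_eq_zero {A B : Matrix m n ℝ} (hAB : ∀ x, A *ᵥ x = 0 → B *ᵥ x = 0)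
    {v : n → DualNumber ℝ} (hv : dm A B *ᵥ v = 0) :
    (A *ᵥ fun l => (v l).fst) = 0 ∧ (A *ᵥ fun l => (v l).snd) = 0 := by
  have hfst : (A *ᵥ fun l => (v l).fst) = 0 := funext fun k => by
    simpa [fst_dm_mulVec] using congrArg TrivSqZeroExt.fst (congrFun hv k)
  refine ⟨hfst, funext fun k => ?_⟩
  simpa [snd_dm_mulVec, hAB _ hfst] using congrArg TrivSqZeroExt.snd (congrFun hv k)

end DualMatrix

namespace SimpleGraph.Connected

variable {V : Type*} [Fintype V] [DecidableEq V] {G : SimpleGraph V} [DecidableRel G.Adj]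

theorem eq_of_lapMatrix_mulVec_eq_zero (hG : G.Connected) {x : V → ℝ}
    (hx : G.lapMatrix ℝ *ᵥ x = 0) (a b : V) : x a = x b :=
  G.lapMatrix_mulVec_eq_zero_iff_forall_reachable.mp hx a b (hG.preconnected a b)

theorem eq_of_dm_lapMatrix_mulVec_eq_zero (hG : G.Connected) {Lhat : Matrix V V ℝ}
    (hrow : Lhat *ᵥ (fun _ => (1 : ℝ)) = 0) {v : V → DualNumber ℝ}
    (hv : dm (G.lapMatrix ℝ) Lhat *ᵥ v = 0) (a b : V) : v a = v b := by
  have hker : ∀ x, G.lapMatrix ℝ *ᵥ x = 0 → Lhat *ᵥ x = 0 := fun x hx => by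
    have hconst : x = x a • fun _ => (1 : ℝ) :=
      funext fun c => by simp [hG.eq_of_lapMatrix_mulVec_eq_zero hx c a]
    rw [hconst, mulVec_smul, hrow, smul_zero]
  obtain ⟨hfst, hsnd⟩ := dm_mulVec_eq_zero hker hv
  exact TrivSqZeroExt.ext (hG.eq_of_lapMatrix_mulVec_eq_zero hfst a b)
    (hG.eq_of_lapMatrix_mulVec_eq_zero hsnd a b)

end SimpleGraph.Connected

theorem dual_resistance_distance_indep_one_inverse_general {n : ℕ}
    (G : SimpleGraph (Fin n)) [DecidableRel G.Adj] (hG : G.Connected)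
    (Lhat : Matrix (Fin n) (Fin n) ℝ) (hsym : Lhatᵀ = Lhat)
    (hrow : Lhat *ᵥ (fun _ => (1 : ℝ)) = 0)
    (Lw Lwd : Matrix (Fin n) (Fin n) (DualNumber ℝ))
    (hLw : Lw = dm (G.lapMatrix ℝ) Lhat)
    (hmp1 : Lw * Lwd * Lw = Lw) (hmp2 : Lwd * Lw * Lwd = Lwd)
    (hmp3 : (Lw * Lwd)ᵀ = Lw * Lwd) (hmp4 : (Lwd * Lw)ᵀ = Lwd * Lw)
    (X : Matrix (Fin n) (Fin n) (DualNumber ℝ)) (hX : Lw * X * Lw = Lw) :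
    ∀ i j : Fin n, i ≠ j →
      X i i + X j j - X i j - X j i = Lwd i i + Lwd j j - 2 * Lwd i j := by
  intro i j _
  have hLsym : Lwᵀ = Lw := by rw [hLw, dm_transpose, (G.isSymm_lapMatrix (R := ℝ)).eq, hsym]
  have hMP : IsMoorePenroseInverse Lw Lwd := ⟨hmp1, hmp2, hmp3, hmp4⟩
  have hperp : ∀ v, Lw *ᵥ v = 0 → (Pi.single i 1 - Pi.single j 1) ⬝ᵥ v = 0 := fun v hv => by
    rw [hLw] at hv
    rw [sub_dotProduct, single_one_dotProduct, single_one_dotProduct,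
      hG.eq_of_dm_lapMatrix_mulVec_eq_zero hrow hv i j, sub_self]
  have hLwd_symm : Lwd j i = Lwd i j := by
    rw [← transpose_apply Lwd i j, hMP.transpose_eq_self hLsym]
  have key := hMP.dotProduct_mulVec_eq hLsym hX hperp
  rw [single_sub_single_dotProduct_mulVec, single_sub_single_dotProduct_mulVec, hLwd_symm] at key
  linear_combination key

/-- For the dual Laplacian `L_w` of a connected dual number weighted graph with dual
Moore-Penrose inverse `L_w†`, every `{1}`-inverse `X` of `L_w` yields the same dual
resistance distance: for `i ≠ j`,
`X_{ii} + X_{jj} - X_{ij} - X_{ji} = (L_w†)_{ii} + (L_w†)_{jj} - 2 (L_w†)_{ij}`. -/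
theorem dual_resistance_distance_indep_one_inverse {n : ℕ} (hn : 0 < n)
    (G : SimpleGraph (Fin n)) [DecidableRel G.Adj] (hG : G.Connected)
    (Lhat : Matrix (Fin n) (Fin n) ℝ) (hsym : Lhatᵀ = Lhat)
    (hrow : Lhat *ᵥ (fun _ => (1 : ℝ)) = 0)
    (hcol : (fun _ => (1 : ℝ)) ᵥ* Lhat = 0)
    (Lw Lwd : Matrix (Fin n) (Fin n) (DualNumber ℝ))
    (hLw : Lw = dm (G.lapMatrix ℝ) Lhat)
    (hmp1 : Lw * Lwd * Lw = Lw) (hmp2 : Lwd * Lw * Lwd = Lwd)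
    (hmp3 : (Lw * Lwd)ᵀ = Lw * Lwd) (hmp4 : (Lwd * Lw)ᵀ = Lwd * Lw)
    (X : Matrix (Fin n) (Fin n) (DualNumber ℝ)) (hX : Lw * X * Lw = Lw) :
    ∀ i j : Fin n, i ≠ j →
      X i i + X j j - X i j - X j i = Lwd i i + Lwd j j - 2 * Lwd i j :=
  dual_resistance_distance_indep_one_inverse_general G hG Lhat hsym hrow Lw Lwd hLw hmp1 hmp2 hmp3
    hmp4 X hX
end
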